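/- Let ℓ(t) = 2·log₂(2t + 1). Let n ≥ 1 be an integer and c > 1, λ > 1 be reals. Then n · Σ_{x=0}^∞ min(c·n·x^(−λ), 1) · ( ℓ((x+1)/n) − ℓ(x/n) ) ≤ 26·c·n^(1/λ)/min(λ − 1, 1), where the x = 0 term of the sum is interpreted with min(c·n·0^(−λ), 1) = 1. -/

import Mathlib

/-- The concave increasing function `ℓ(t) = 2·log₂(2t + 1)` (with `ℓ(0) = 0`)
which upper-bounds the Elias gamma codeword length. -/
noncomputable def ell (t : ℝ) : ℝ := 2 * Real.logb 2 (2 * t + 1)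

/-!
Since `ℓ` has slope at most `4 / log 2` on `[0, ∞)`, every increment `n·(ℓ((x+1)/n) − ℓ(x/n))`
is at most `4 / log 2`. With `y = (c n)^{1/λ}`, the weight `min(c n x^{-λ}, 1)` is at most `1`,
and at most `(y/x)^λ` for `x ≥ y`. The integral test bounds `∑_{x ≥ ⌈y⌉} (y/x)^λ` by
`1 + y/(λ−1)`, so the series is at most
`(4 / log 2)(y + 2 + y/(λ−1)) ≤ (16 / log 2)·c·n^{1/λ}/min(λ−1, 1)`, and `16 / log 2 < 26`.
-/

open Real Set

lemma ell_le_ell {s t : ℝ} (hs : 0 ≤ s) (hst : s ≤ t) : ell s ≤ ell t := by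
  unfold ell
  gcongr
  norm_num

lemma ell_sub_ell_le {s t : ℝ} (hs : 0 ≤ s) (hst : s ≤ t) :
    ell t - ell s ≤ 4 / log 2 * (t - s) := by
  have hs' : 0 < 2 * s + 1 := by linarith
  have ht' : 0 < 2 * t + 1 := by linarith
  have hlog : log (2 * t + 1) - log (2 * s + 1) ≤ 2 * (t - s) := calc
    _ = log ((2 * t + 1) / (2 * s + 1)) := (log_div ht'.ne' hs'.ne').symm
    _ ≤ (2 * t + 1) / (2 * s + 1) - 1 := log_le_sub_one_of_pos (div_pos ht' hs')
    _ = 2 * (t - s) / (2 * s + 1) := by field_simp; ring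
    _ ≤ 2 * (t - s) := div_le_self (by linarith) (by linarith)
  have hlog2 : 0 < log 2 := log_pos one_lt_two
  calc ell t - ell s = 2 * (log (2 * t + 1) - log (2 * s + 1)) / log 2 := by
        simp only [ell, logb]; ring
    _ ≤ 2 * (2 * (t - s)) / log 2 := by gcongr
    _ = 4 / log 2 * (t - s) := by ring

lemma natCast_mul_ell_increment_nonneg (n x : ℕ) :
    0 ≤ (n : ℝ) * (ell ((x + 1) / n) - ell (x / n)) :=
  mul_nonneg n.cast_nonneg (sub_nonneg.mpr (ell_le_ell (by positivity) (by gcongr; linarith)))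

lemma natCast_mul_ell_increment_le (n x : ℕ) :
    (n : ℝ) * (ell ((x + 1) / n) - ell (x / n)) ≤ 4 / log 2 := by
  rcases n.eq_zero_or_pos with rfl | hn
  · simp only [Nat.cast_zero, zero_mul]; positivity
  have hn' : (0 : ℝ) < n := Nat.cast_pos.mpr hn
  calc (n : ℝ) * (ell ((x + 1) / n) - ell (x / n))
      ≤ n * (4 / log 2 * ((x + 1) / n - x / n)) := by
        gcongr; exact ell_sub_ell_le (by positivity) (by gcongr; linarith)
    _ = 4 / log 2 := by field_simp; ring

lemma natCast_mul_mul_ell_increment_le {w : ℝ} (hw : 0 ≤ w) (n x : ℕ) :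
    (n : ℝ) * (w * (ell ((x + 1) / n) - ell (x / n))) ≤ 4 / log 2 * w := by
  rw [mul_left_comm, mul_comm _ w]
  exact mul_le_mul_of_nonneg_left (natCast_mul_ell_increment_le n x) hw

lemma tsum_rpow_neg_nat_add_le {lam : ℝ} (hlam : 1 < lam) {T : ℕ} (hT : 0 < T) :
    ∑' k : ℕ, ((k + T : ℕ) : ℝ) ^ (-lam) ≤ (T : ℝ) ^ (-lam) + (T : ℝ) ^ (1 - lam) / (lam - 1) := by
  have hT' : (0 : ℝ) < T := Nat.cast_pos.mpr hT
  have hsum : Summable fun k : ℕ => ((k + T : ℕ) : ℝ) ^ (-lam) :=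
    (summable_nat_add_iff T).mpr (summable_nat_rpow.mpr (by linarith))
  have htail : ∑' k : ℕ, ((k + T + 1 : ℕ) : ℝ) ^ (-lam) ≤ (T : ℝ) ^ (1 - lam) / (lam - 1) :=
    calc _ ≤ ∫ t in Ioi (T : ℝ), t ^ (-lam) :=
          AntitoneOn.tsum_comp_add_le_integral T
            ((antitoneOn_rpow_Ioi_of_exponent_nonpos (by linarith)).mono
              fun t ht => hT'.trans_le ht)
            (integrableOn_Ioi_rpow_of_lt (by linarith) hT')
            fun t ht => rpow_nonneg (hT'.trans ht).le _
      _ = (T : ℝ) ^ (1 - lam) / (lam - 1) := by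
          rw [integral_Ioi_rpow_of_lt (by linarith) hT', ← neg_div_neg_eq]
          ring_nf
  rw [hsum.tsum_eq_zero_add, zero_add]
  simpa only [add_right_comm _ 1 T, add_le_add_iff_left] using htail

lemma tsum_le_of_le_of_le_div_rpow {f : ℕ → ℝ} {A y lam : ℝ} (hlam : 1 < lam) (hy : 0 < y)
    (hf0 : ∀ x, 0 ≤ f x) (hfA : ∀ x, f x ≤ A)
    (hf_tail : ∀ x : ℕ, y ≤ x → f x ≤ A * (y / x) ^ lam) :
    ∑' x, f x ≤ A * (y + 2 + y / (lam - 1)) := by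
  set T := ⌈y⌉₊
  have hT : 0 < T := Nat.ceil_pos.mpr hy
  have hyT : y ≤ T := Nat.le_ceil y
  have hTy : (T : ℝ) ≤ y + 1 := (Nat.ceil_lt_add_one hy.le).le
  have hA : 0 ≤ A := (hf0 0).trans (hfA 0)
  have hf_tail' (k : ℕ) : f (k + T) ≤ A * y ^ lam * ((k + T : ℕ) : ℝ) ^ (-lam) := by
    rw [mul_assoc, rpow_neg (Nat.cast_nonneg _), ← div_eq_mul_inv,
      ← div_rpow hy.le (Nat.cast_nonneg _)]
    exact hf_tail _ (hyT.trans (mod_cast Nat.le_add_left T k))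
  have hg : Summable fun k : ℕ => A * y ^ lam * ((k + T : ℕ) : ℝ) ^ (-lam) :=
    ((summable_nat_add_iff T).mpr (summable_nat_rpow.mpr (by linarith))).mul_left _
  have hf : Summable f :=
    (summable_nat_add_iff T).mp (hg.of_nonneg_of_le (fun k => hf0 _) hf_tail')
  have hhead : ∑ x ∈ Finset.range T, f x ≤ T * A := by
    simpa using Finset.sum_le_sum fun x (_ : x ∈ Finset.range T) => hfA x
  have hy_inv : y ^ lam * y ^ (-lam) = 1 := by rw [← rpow_add hy, add_neg_cancel, rpow_zero]
  have hy_one : y ^ lam * y ^ (1 - lam) = y := by rw [← rpow_add hy, add_sub_cancel, rpow_one]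
  have htail : ∑' k, f (k + T) ≤ A * (1 + y / (lam - 1)) := calc
    _ ≤ ∑' k : ℕ, A * y ^ lam * ((k + T : ℕ) : ℝ) ^ (-lam) :=
        ((summable_nat_add_iff T).mpr hf).tsum_le_tsum hf_tail' hg
    _ = A * y ^ lam * ∑' k : ℕ, ((k + T : ℕ) : ℝ) ^ (-lam) := tsum_mul_left
    _ ≤ A * y ^ lam * ((T : ℝ) ^ (-lam) + (T : ℝ) ^ (1 - lam) / (lam - 1)) := by
        gcongr; exact tsum_rpow_neg_nat_add_le hlam hT
    _ ≤ A * y ^ lam * (y ^ (-lam) + y ^ (1 - lam) / (lam - 1)) := by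
        have := sub_pos.mpr hlam
        gcongr A * y ^ lam * (?_ + ?_ / _) <;> exact rpow_le_rpow_of_nonpos hy hyT (by linarith)
    _ = A * (1 + y / (lam - 1)) := by
        rw [mul_assoc, mul_add, hy_inv, ← mul_div_assoc, hy_one]
  calc ∑' x, f x = ∑ x ∈ Finset.range T, f x + ∑' k, f (k + T) :=
        (hf.sum_add_tsum_nat_add T).symm
    _ ≤ T * A + A * (1 + y / (lam - 1)) := add_le_add hhead htail
    _ ≤ A * (y + 2 + y / (lam - 1)) := by nlinarith

noncomputable def powerLawWeight (a lam : ℝ) (x : ℕ) : ℝ :=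
  if x = 0 then 1 else min (a * (x : ℝ) ^ (-lam)) 1

lemma powerLawWeight_nonneg {a : ℝ} (ha : 0 ≤ a) (lam : ℝ) (x : ℕ) :
    0 ≤ powerLawWeight a lam x := by
  unfold powerLawWeight
  split_ifs <;> positivity

lemma powerLawWeight_le_one (a lam : ℝ) (x : ℕ) : powerLawWeight a lam x ≤ 1 := by
  unfold powerLawWeight
  split_ifs
  exacts [le_rfl, min_le_right _ _]

lemma powerLawWeight_le_div_rpow {a lam : ℝ} (ha : 0 ≤ a) (hlam : lam ≠ 0) {x : ℕ} (hx : x ≠ 0) :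
    powerLawWeight a lam x ≤ (a ^ (1 / lam) / x) ^ lam := by
  rw [powerLawWeight, if_neg hx, div_rpow (by positivity) (Nat.cast_nonneg _), one_div,
    rpow_inv_rpow ha hlam, div_eq_mul_inv, ← rpow_neg (Nat.cast_nonneg _)]
  exact min_le_left _ _

lemma mul_rpow_le_mul_rpow {a b p : ℝ} (ha : 1 ≤ a) (hb : 0 ≤ b) (hp : p ≤ 1) :
    (a * b) ^ p ≤ a * b ^ p := by
  rw [mul_rpow (by linarith) hb]
  gcongr
  calc a ^ p ≤ a ^ (1 : ℝ) := rpow_le_rpow_of_exponent_le ha hp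
    _ = a := rpow_one a

lemma add_two_add_div_sub_one_le {y z lam : ℝ} (hyz : y ≤ z) (hz : 1 ≤ z) (hlam : 1 < lam) :
    y + 2 + y / (lam - 1) ≤ 4 * z / min (lam - 1) 1 := by
  have hm : 0 < min (lam - 1) 1 := lt_min (by linarith) one_pos
  have hz_le : z ≤ z / min (lam - 1) 1 := le_div_self (by linarith) hm (min_le_right _ _)
  calc y + 2 + y / (lam - 1)
      ≤ z / min (lam - 1) 1 + 2 * z / min (lam - 1) 1 + z / min (lam - 1) 1 := by
        gcongr ?_ + ?_ + ?_
        · exact hyz.trans hz_le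
        · rw [mul_div_assoc]; linarith
        · exact div_le_div₀ (by linarith) hyz hm (min_le_left _ _)
    _ = 4 * z / min (lam - 1) 1 := by ring

/-- The key series estimate for the gap-encoding part of the
difference run-length scheme under a power-law tail:
`n · ∑_{x=0}^∞ min(c·n·x^{-λ}, 1)·(ℓ((x+1)/n) − ℓ(x/n)) ≤ 26·c·n^{1/λ}/min(λ−1,1)`,
where the `x = 0` term is interpreted with `min(c·n·0^{-λ}, 1) = 1`. -/
theorem gap_series_power_law
    (n : ℕ) (hn : 1 ≤ n) (c lam : ℝ) (hc : 1 < c) (hlam : 1 < lam) :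
    (n : ℝ) * ∑' x : ℕ,
        (if x = 0 then 1 else min (c * n * (x : ℝ) ^ (-lam)) 1)
          * (ell ((x + 1) / n) - ell (x / n))
      ≤ 26 * c * (n : ℝ) ^ (1 / lam) / min (lam - 1) 1 := by
  have hcn : 0 < c * n := mul_pos (by linarith) (Nat.cast_pos.mpr hn)
  have hy : 0 < (c * n) ^ (1 / lam) := rpow_pos_of_pos hcn _
  have hyz : (c * n) ^ (1 / lam) ≤ c * (n : ℝ) ^ (1 / lam) :=
    mul_rpow_le_mul_rpow hc.le (Nat.cast_nonneg n) ((div_le_one (by linarith)).mpr hlam.le)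
  have hz : 1 ≤ c * (n : ℝ) ^ (1 / lam) :=
    one_le_mul_of_one_le_of_one_le hc.le (one_le_rpow (mod_cast hn) (by positivity))
  have hL : 4 / log 2 * 4 ≤ 26 := by
    rw [div_mul_eq_mul_div, div_le_iff₀ (log_pos one_lt_two)]
    linarith [log_two_gt_d9]
  have hw (x : ℕ) := powerLawWeight_nonneg hcn.le lam x
  have hterm (x : ℕ) := natCast_mul_mul_ell_increment_le (hw x) n x
  change (n : ℝ) * ∑' x : ℕ, powerLawWeight (c * n) lam x * (ell ((x + 1) / n) - ell (x / n)) ≤ _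
  rw [← tsum_mul_left]
  calc _ ≤ 4 / log 2 * ((c * n) ^ (1 / lam) + 2 + (c * n) ^ (1 / lam) / (lam - 1)) := by
        refine tsum_le_of_le_of_le_div_rpow hlam hy (fun x => ?_)
          (fun x => (hterm x).trans ?_) (fun x hx => (hterm x).trans ?_)
        · rw [mul_left_comm]
          exact mul_nonneg (hw x) (natCast_mul_ell_increment_nonneg n x)
        · exact mul_le_of_le_one_right (by positivity) (powerLawWeight_le_one _ lam x)
        · have hx0 : x ≠ 0 := by rintro rfl; rw [Nat.cast_zero] at hx; linarith
          exact mul_le_mul_of_nonneg_left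
            (powerLawWeight_le_div_rpow hcn.le (by linarith : 0 < lam).ne' hx0) (by positivity)
    _ ≤ 4 / log 2 * (4 * (c * (n : ℝ) ^ (1 / lam)) / min (lam - 1) 1) := by
        gcongr; exact add_two_add_div_sub_one_le hyz hz hlam
    _ = 4 / log 2 * 4 * (c * (n : ℝ) ^ (1 / lam)) / min (lam - 1) 1 := by ring
    _ ≤ 26 * (c * (n : ℝ) ^ (1 / lam)) / min (lam - 1) 1 := by gcongr
    _ = 26 * c * (n : ℝ) ^ (1 / lam) / min (lam - 1) 1 := by ring
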